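/- arXiv:math/0608736 — 5 statements merged into one kernel-verified Lean document; each statement's English description precedes it below -/
import Mathlib

section
/- Let ξ be a small-scale control semigroup and S a control semigroup, so that Link(ξ, S) is a global control semigroup. Then for every metric space X: dim_{Link(ξ,S)} X = max{smdim_ξ X, asdim_S X}. -/
open Filter Set Metric Topology
open scoped NNReal ENNReal

/-- A large-scale (asymptotic) dim-control function: continuous, increasing,
eventually at least the identity, tending to infinity. -/
def IsLSControl (f : ℝ≥0 → ℝ≥0) : Prop :=
  Continuous f ∧ Monotone f ∧ (∀ᶠ x in atTop, x ≤ f x) ∧ Tendsto f atTop atTop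

/-- Asymptotically linear: coincides with a linear function on a neighborhood of infinity. -/
def IsAsympLinear (f : ℝ≥0 → ℝ≥0) : Prop :=
  ∃ a b : ℝ≥0, ∀ᶠ x in atTop, f x = a * x + b

/-- A (large-scale) control semigroup. -/
def IsControlSemigroup (S : Set (ℝ≥0 → ℝ≥0)) : Prop :=
  (∀ f ∈ S, IsLSControl f) ∧
  (∀ f, IsLSControl f → IsAsympLinear f → f ∈ S) ∧
  (∀ f ∈ S, ∀ g ∈ S, f ∘ g ∈ S)

/-- A family of subsets is `s`-disjoint if distinct members are at distance `> s`. -/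
def SDisjoint {X : Type*} [MetricSpace X] (s : ℝ≥0) (𝒰 : Set (Set X)) : Prop :=
  ∀ U ∈ 𝒰, ∀ V ∈ 𝒰, U ≠ V → ∀ x ∈ U, ∀ y ∈ V, (s : ℝ) < dist x y

/-- A family of subsets is `D`-bounded if each member has diameter at most `D`. -/
def BoundedBy {X : Type*} [MetricSpace X] (D : ℝ≥0) (𝒰 : Set (Set X)) : Prop :=
  ∀ U ∈ 𝒰, EMetric.diam U ≤ (D : ℝ≥0∞)

/-- `asdim_S X ≤ n`. -/
def ASDimLE (S : Set (ℝ≥0 → ℝ≥0)) (X : Type*) [MetricSpace X] (n : ℕ) : Prop :=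
  ∃ f ∈ S, ∃ s₀ : ℝ≥0, ∀ s : ℝ≥0, s₀ ≤ s →
    ∃ 𝒰 : Fin (n + 1) → Set (Set X),
      (⋃ i, ⋃₀ 𝒰 i) = univ ∧ ∀ i, SDisjoint s (𝒰 i) ∧ BoundedBy (f s) (𝒰 i)

/-- The `S`-controlled asymptotic dimension, as an element of `ℕ∞`. -/
noncomputable def ASDim (S : Set (ℝ≥0 → ℝ≥0)) (X : Type*) [MetricSpace X] : ℕ∞ :=
  sInf {k : ℕ∞ | ∃ n : ℕ, k = n ∧ ASDimLE S X n}

/-- `S₁ ⪯ S₂` : `S₂` is finer than `S₁`. -/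
def Preceq (S₁ S₂ : Set (ℝ≥0 → ℝ≥0)) : Prop :=
  ∀ f ∈ S₂, ∃ g ∈ S₁, ∀ᶠ x in atTop, f x ≤ g x

/-- A small-scale dim-control function. -/
def IsSSControl (f : ℝ≥0 → ℝ≥0) : Prop :=
  Continuous f ∧ Monotone f ∧ f 0 = 0 ∧ ∀ᶠ x in 𝓝[>] (0 : ℝ≥0), x ≤ f x

/-- Coincides with a linear function on a neighborhood of `0`. -/
def IsLinearNearZero (f : ℝ≥0 → ℝ≥0) : Prop :=
  ∃ a b : ℝ≥0, ∀ᶠ x in 𝓝 (0 : ℝ≥0), f x = a * x + b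

/-- A small-scale control semigroup. -/
def IsSSControlSemigroup (ξ : Set (ℝ≥0 → ℝ≥0)) : Prop :=
  (∀ f ∈ ξ, IsSSControl f) ∧
  (∀ f, IsSSControl f → IsLinearNearZero f → f ∈ ξ) ∧
  (∀ f ∈ ξ, ∀ g ∈ ξ, f ∘ g ∈ ξ)

/-- A global dim-control function. -/
def IsGlobalControl (f : ℝ≥0 → ℝ≥0) : Prop :=
  Continuous f ∧ Monotone f ∧ f 0 = 0 ∧ Tendsto f atTop atTop ∧
    (∀ᶠ x in 𝓝[>] (0 : ℝ≥0), x ≤ f x) ∧ (∀ᶠ x in atTop, x ≤ f x)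

/-- A global control semigroup. -/
def IsGlobalControlSemigroup (S : Set (ℝ≥0 → ℝ≥0)) : Prop :=
  (∀ f ∈ S, IsGlobalControl f) ∧
  (∀ f, IsGlobalControl f → IsLinearNearZero f → IsAsympLinear f → f ∈ S) ∧
  (∀ f ∈ S, ∀ g ∈ S, f ∘ g ∈ S)

/-- `smdim_ξ X ≤ n`. -/
def SMDimLE (ξ : Set (ℝ≥0 → ℝ≥0)) (X : Type*) [MetricSpace X] (n : ℕ) : Prop :=
  ∃ f ∈ ξ, ∃ s₀ : ℝ≥0, 0 < s₀ ∧ ∀ s : ℝ≥0, 0 < s → s ≤ s₀ →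
    ∃ 𝒰 : Fin (n + 1) → Set (Set X),
      (⋃ i, ⋃₀ 𝒰 i) = univ ∧ ∀ i, SDisjoint s (𝒰 i) ∧ BoundedBy (f s) (𝒰 i)

/-- The `ξ`-controlled small-scale dimension. -/
noncomputable def SMDim (ξ : Set (ℝ≥0 → ℝ≥0)) (X : Type*) [MetricSpace X] : ℕ∞ :=
  sInf {k : ℕ∞ | ∃ n : ℕ, k = n ∧ SMDimLE ξ X n}

/-- `dim_S̄ X ≤ n` (global dimension). -/
def GDimLE (S : Set (ℝ≥0 → ℝ≥0)) (X : Type*) [MetricSpace X] (n : ℕ) : Prop :=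
  ∃ f ∈ S, ∀ s : ℝ≥0, 0 < s →
    ∃ 𝒰 : Fin (n + 1) → Set (Set X),
      (⋃ i, ⋃₀ 𝒰 i) = univ ∧ ∀ i, SDisjoint s (𝒰 i) ∧ BoundedBy (f s) (𝒰 i)

/-- The `S̄`-controlled global dimension. -/
noncomputable def GDim (S : Set (ℝ≥0 → ℝ≥0)) (X : Type*) [MetricSpace X] : ℕ∞ :=
  sInf {k : ℕ∞ | ∃ n : ℕ, k = n ∧ GDimLE S X n}

/-- Large-scale truncation `Trunc^{**}(S̄)`. -/
def TruncInf (S : Set (ℝ≥0 → ℝ≥0)) : Set (ℝ≥0 → ℝ≥0) :=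
  {g | IsLSControl g ∧ ∃ f ∈ S, ∀ᶠ x in atTop, g x = f x}

/-- Small-scale truncation `Trunc_{**}(S̄)`. -/
def TruncZero (S : Set (ℝ≥0 → ℝ≥0)) : Set (ℝ≥0 → ℝ≥0) :=
  {g | IsSSControl g ∧ ∃ f ∈ S, ∀ᶠ x in 𝓝 (0 : ℝ≥0), g x = f x}

/-- The linked set `Link(ξ, S)`. -/
def Link (ξ S : Set (ℝ≥0 → ℝ≥0)) : Set (ℝ≥0 → ℝ≥0) :=
  {g | Continuous g ∧ Monotone g ∧
    ∃ g₁ ∈ ξ, ∃ g₂ ∈ S, (∀ᶠ x in 𝓝 (0 : ℝ≥0), g x = g₁ x) ∧ (∀ᶠ x in atTop, g x = g₂ x)}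

/-! A `Link ξ S`-control function agrees with a member of `ξ` near `0` and with a member of `S`
near `∞`, so global covers give both small-scale and large-scale covers. Conversely, from
`f₁ ∈ ξ` valid at scales `s ≤ a` and `f₂ ∈ S` valid at scales `s ≥ s₁`, one builds a single
continuous increasing control that is `f₁` near `0`, ramps up by `f₂ t` on `[a/2, a]`
(`t = max s₁ a`), and is `f₁ a + f₂` beyond `t`; the latter lies in `S` as the composite of
`f₂` with the asymptotically linear map `x ↦ x + f₁ a`. At scales `s ∈ (a, t)` one uses the
large-scale cover at scale `t`. Both dimension conditions are upward closed in `n`, so the least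
`n` satisfying both is the maximum of the two least ones. -/

def HasDimCover (X : Type*) [MetricSpace X] (n : ℕ) (s D : ℝ≥0) : Prop :=
  ∃ 𝒰 : Fin (n + 1) → Set (Set X),
    (⋃ i, ⋃₀ 𝒰 i) = univ ∧ ∀ i, SDisjoint s (𝒰 i) ∧ BoundedBy D (𝒰 i)

section Covers

variable {X : Type*} [MetricSpace X]

lemma SDisjoint.mono {s s' : ℝ≥0} {𝒰 : Set (Set X)} (h : s' ≤ s) (hd : SDisjoint s 𝒰) :
    SDisjoint s' 𝒰 :=
  fun U hU V hV hUV x hx y hy => (NNReal.coe_le_coe.mpr h).trans_lt (hd U hU V hV hUV x hx y hy)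

lemma BoundedBy.mono {D D' : ℝ≥0} {𝒰 : Set (Set X)} (h : D ≤ D') (hb : BoundedBy D 𝒰) :
    BoundedBy D' 𝒰 :=
  fun U hU => (hb U hU).trans (ENNReal.coe_le_coe.mpr h)

lemma HasDimCover.mono {n : ℕ} {s s' D D' : ℝ≥0} (hs : s' ≤ s) (hD : D ≤ D')
    (h : HasDimCover X n s D) : HasDimCover X n s' D' := by
  obtain ⟨𝒰, hcover, h𝒰⟩ := h
  exact ⟨𝒰, hcover, fun i => ⟨(h𝒰 i).1.mono hs, (h𝒰 i).2.mono hD⟩⟩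

lemma HasDimCover.mono_dim {n m : ℕ} {s D : ℝ≥0} (hnm : n ≤ m) (h : HasDimCover X n s D) :
    HasDimCover X m s D := by
  obtain ⟨𝒰, hcover, h𝒰⟩ := h
  refine ⟨fun i => if hi : (i : ℕ) < n + 1 then 𝒰 ⟨i, hi⟩ else ∅, ?_, fun i => ?_⟩
  · refine eq_univ_of_forall fun x => ?_
    obtain ⟨_, ⟨j, rfl⟩, hx⟩ := hcover ▸ mem_univ x
    exact mem_iUnion.mpr ⟨Fin.castLE (by omega) j, by simpa [j.2] using hx⟩
  · dsimp only
    split_ifs with hi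
    · exact h𝒰 _
    · exact ⟨fun U hU => absurd hU (notMem_empty U), fun U hU => absurd hU (notMem_empty U)⟩

variable {ξ S : Set (ℝ≥0 → ℝ≥0)}

lemma smdimLE_mono : Monotone (SMDimLE ξ X) := by
  rintro n m hnm ⟨f, hf, s₀, hs₀, H⟩
  exact ⟨f, hf, s₀, hs₀, fun s hs hss => HasDimCover.mono_dim hnm (H s hs hss)⟩

lemma asdimLE_mono : Monotone (ASDimLE S X) := by
  rintro n m hnm ⟨f, hf, s₀, H⟩
  exact ⟨f, hf, s₀, fun s hs => HasDimCover.mono_dim hnm (H s hs)⟩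

lemma SMDimLE.of_gdimLE_link {n : ℕ} (h : GDimLE (Link ξ S) X n) : SMDimLE ξ X n := by
  obtain ⟨F, ⟨-, -, g₁, hg₁, -, -, hF₀, -⟩, H⟩ := h
  obtain ⟨ε, hε, hF⟩ := NNReal.nhds_zero_basis.eventually_iff.mp hF₀
  refine ⟨g₁, hg₁, ε / 2, half_pos hε, fun s hs hsε => ?_⟩
  rw [← hF (hsε.trans_lt (half_lt_self hε))]
  exact H s hs

lemma ASDimLE.of_gdimLE_link {n : ℕ} (h : GDimLE (Link ξ S) X n) : ASDimLE S X n := by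
  obtain ⟨F, ⟨-, -, -, -, g₂, hg₂, -, hFtop⟩, H⟩ := h
  obtain ⟨a, hF⟩ := eventually_atTop.mp hFtop
  refine ⟨g₂, hg₂, max a 1, fun s hs => ?_⟩
  rw [← hF s ((le_max_left a 1).trans hs)]
  exact H s (one_pos.trans_le ((le_max_right a 1).trans hs))

end Covers

lemma IsControlSemigroup.add_const_mem {S : Set (ℝ≥0 → ℝ≥0)} (hS : IsControlSemigroup S)
    {f : ℝ≥0 → ℝ≥0} (hf : f ∈ S) (c : ℝ≥0) : (fun x => f x + c) ∈ S := by
  have hshift : (fun x : ℝ≥0 => x + c) ∈ S :=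
    hS.2.1 _ ⟨continuous_id.add continuous_const, fun _ _ h => add_le_add_left h c,
      Eventually.of_forall fun _ => le_self_add,
      tendsto_atTop_mono (fun _ => le_self_add) tendsto_id⟩
      ⟨1, c, Eventually.of_forall fun x => by rw [one_mul]⟩
  exact hS.2.2 _ hshift _ hf

section Glue

/-- For `a ≤ t`: equal to `f` on `[0, a/2]`, rising linearly by `g t` on `[a/2, a]`, equal to
`f a + g t` on `[a, t]` and to `f a + g` on `[t, ∞)`. -/
noncomputable def glue (f g : ℝ≥0 → ℝ≥0) (a t : ℝ≥0) (x : ℝ≥0) : ℝ≥0 :=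
  f (min x a) + g t * min ((x - a / 2) / (a / 2)) 1 + (g (max x t) - g t)

variable {f g : ℝ≥0 → ℝ≥0} {a t x : ℝ≥0}

lemma continuous_glue (hf : Continuous f) (hg : Continuous g) : Continuous (glue f g a t) :=
  ((hf.comp (continuous_id.min continuous_const)).add (continuous_const.mul
    (((continuous_id.sub continuous_const).div_const _).min continuous_const))).add
    ((hg.comp (continuous_id.max continuous_const)).sub continuous_const)

lemma monotone_glue (hf : Monotone f) (hg : Monotone g) : Monotone (glue f g a t) := by
  intro x y hxy
  unfold glue
  gcongr
  · exact hf (min_le_min_right a hxy)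
  · exact hg (max_le_max_right t hxy)

lemma glue_eq_left (hx : x ≤ a / 2) (hat : a ≤ t) : glue f g a t x = f x := by
  have hxa : x ≤ a := hx.trans (NNReal.half_le_self a)
  simp [glue, min_eq_left hxa, tsub_eq_zero_of_le hx, max_eq_right (hxa.trans hat)]

lemma glue_eq_of_le (hg : Monotone g) (ha : 0 < a) (hx : a ≤ x) :
    glue f g a t x = f a + g (max x t) := by
  have hramp : 1 ≤ (x - a / 2) / (a / 2) := by
    rw [one_le_div (half_pos ha), le_tsub_iff_left ((NNReal.half_le_self a).trans hx), add_halves]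
    exact hx
  rw [glue, min_eq_right hx, min_eq_right hramp, mul_one, add_assoc,
    add_tsub_cancel_of_le (hg (le_max_right x t))]

lemma le_glue (hx : x ≤ a) : f x ≤ glue f g a t x := by
  have h : f (min x a) ≤ glue f g a t x := le_add_right le_self_add
  rwa [min_eq_left hx] at h

end Glue

lemma gdimLE_link_of_smdimLE_of_asdimLE {ξ S : Set (ℝ≥0 → ℝ≥0)} (hξ : IsSSControlSemigroup ξ)
    (hS : IsControlSemigroup S) {X : Type*} [MetricSpace X] {n : ℕ}
    (hsm : SMDimLE ξ X n) (has : ASDimLE S X n) : GDimLE (Link ξ S) X n := by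
  obtain ⟨f₁, hf₁, a, ha, H₁⟩ := hsm
  obtain ⟨f₂, hf₂, s₁, H₂⟩ := has
  obtain ⟨hf₁c, hf₁m, -⟩ := hξ.1 f₁ hf₁
  obtain ⟨hf₂c, hf₂m, -⟩ := hS.1 f₂ hf₂
  have hat : a ≤ max s₁ a := le_max_right s₁ a
  refine ⟨glue f₁ f₂ a (max s₁ a), ⟨continuous_glue hf₁c hf₂c, monotone_glue hf₁m hf₂m,
    f₁, hf₁, _, hS.add_const_mem hf₂ (f₁ a), ?_, ?_⟩, fun s hs => ?_⟩
  · filter_upwards [Iic_mem_nhds (half_pos ha)] with x hx using glue_eq_left hx hat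
  · filter_upwards [eventually_ge_atTop (max s₁ a)] with x hx
    rw [glue_eq_of_le hf₂m ha (hat.trans hx), max_eq_left hx, add_comm]
  · rcases le_or_gt s a with hsa | has
    · exact HasDimCover.mono le_rfl (le_glue hsa) (H₁ s hs hsa)
    · refine HasDimCover.mono (le_max_left s _) ?_
        (H₂ _ ((le_max_left s₁ a).trans (le_max_right s _)))
      rw [glue_eq_of_le hf₂m ha has.le]
      exact le_add_self

lemma sInf_natCast_and_eq_max {P Q : ℕ → Prop} (hP : Monotone P) (hQ : Monotone Q) :
    sInf {k : ℕ∞ | ∃ n : ℕ, k = n ∧ P n ∧ Q n} =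
      max (sInf {k : ℕ∞ | ∃ n : ℕ, k = n ∧ P n}) (sInf {k : ℕ∞ | ∃ n : ℕ, k = n ∧ Q n}) := by
  refine le_antisymm ?_ (max_le (sInf_le_sInf fun k ⟨n, hk, hn, _⟩ => ⟨n, hk, hn⟩)
    (sInf_le_sInf fun k ⟨n, hk, _, hn⟩ => ⟨n, hk, hn⟩))
  rcases eq_empty_or_nonempty {k : ℕ∞ | ∃ n : ℕ, k = n ∧ P n} with hA | hA
  · simp [hA]
  rcases eq_empty_or_nonempty {k : ℕ∞ | ∃ n : ℕ, k = n ∧ Q n} with hB | hB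
  · simp [hB]
  obtain ⟨p, hp, hPp⟩ := csInf_mem hA
  obtain ⟨q, hq, hQq⟩ := csInf_mem hB
  rw [hp, hq, ← Nat.mono_cast.map_max]
  exact sInf_le ⟨_, rfl, hP (le_max_left p q) hPp, hQ (le_max_right p q) hQq⟩

/-- `dim_{Link(ξ,S)} X = max (smdim_ξ X) (asdim_S X)`. -/
theorem gdim_link_eq_max (ξ S : Set (ℝ≥0 → ℝ≥0))
    (hξ : IsSSControlSemigroup ξ) (hS : IsControlSemigroup S)
    (X : Type*) [MetricSpace X] :
    GDim (Link ξ S) X = max (SMDim ξ X) (ASDim S X) := by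
  have hG : GDimLE (Link ξ S) X = fun n => SMDimLE ξ X n ∧ ASDimLE S X n :=
    funext fun n => propext ⟨fun h => ⟨.of_gdimLE_link h, .of_gdimLE_link h⟩,
      fun h => gdimLE_link_of_smdimLE_of_asdimLE hξ hS h.1 h.2⟩
  rw [GDim, hG]
  exact sInf_natCast_and_eq_max smdimLE_mono asdimLE_mono
end

section
/- Let f be a large-scale dim-control function such that f(x) > x for all sufficiently large x. Then there exists a large-scale dim-control function g such that for every n ∈ ℕ, g(x) > fⁿ(x) (the n-fold composition of f) for all sufficiently large x. -/
open Filter Set Metric Topology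
open scoped NNReal ENNReal

/-!
For any sequence `φ` of continuous monotone maps of `ℝ≥0`, the function
`x ↦ x + ∑ₙ min (x - n) 1 * (φ n x + 1)` is continuous and monotone, being a locally finite sum
(the `n`-th summand vanishes for `x ≤ n`, by truncated subtraction), and from `x = n + 1` on its
`n`-th summand alone exceeds `φ n x`. Take `φ n = f^[n]`.
-/

section RampMajorant

variable (φ : ℕ → ℝ≥0 → ℝ≥0)

def rampTerm (n : ℕ) (x : ℝ≥0) : ℝ≥0 :=
  min (x - n) 1 * (φ n x + 1)

noncomputable def rampMajorant (x : ℝ≥0) : ℝ≥0 :=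
  x + ∑ᶠ n : ℕ, rampTerm φ n x

variable {φ}

theorem rampTerm_eq_zero_of_le {n : ℕ} {x : ℝ≥0} (h : x ≤ n) : rampTerm φ n x = 0 := by
  simp [rampTerm, tsub_eq_zero_of_le h]

theorem rampTerm_eq_of_le {n : ℕ} {x : ℝ≥0} (h : n + 1 ≤ x) : rampTerm φ n x = φ n x + 1 := by
  rw [rampTerm, min_eq_right (le_tsub_of_add_le_left h), one_mul]

theorem support_rampTerm_subset (n : ℕ) : Function.support (rampTerm φ n) ⊆ Ioi (n : ℝ≥0) :=
  fun _ hx => not_le.1 fun h => hx (rampTerm_eq_zero_of_le h)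

theorem locallyFinite_support_rampTerm :
    LocallyFinite fun n => Function.support (rampTerm φ n) := by
  intro x
  refine ⟨Iio (x + 1), Iio_mem_nhds (lt_add_one x), (finite_Iio ⌈x + 1⌉₊).subset ?_⟩
  rintro n ⟨y, hyn, hyx⟩
  exact Nat.lt_ceil.2 ((support_rampTerm_subset n hyn).trans hyx)

theorem hasFiniteSupport_rampTerm (x : ℝ≥0) :
    Function.HasFiniteSupport fun n => rampTerm φ n x :=
  locallyFinite_support_rampTerm.point_finite x

theorem continuous_rampTerm {n : ℕ} (hc : Continuous (φ n)) : Continuous (rampTerm φ n) := by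
  unfold rampTerm
  fun_prop

theorem monotone_rampTerm {n : ℕ} (hm : Monotone (φ n)) : Monotone (rampTerm φ n) :=
  fun _ _ h => by
    unfold rampTerm
    gcongr
    exact hm h

theorem continuous_rampMajorant (hc : ∀ n, Continuous (φ n)) : Continuous (rampMajorant φ) :=
  continuous_id.add <|
    continuous_finsum (fun n => continuous_rampTerm (hc n)) locallyFinite_support_rampTerm

theorem monotone_rampMajorant (hm : ∀ n, Monotone (φ n)) : Monotone (rampMajorant φ) :=
  fun x y h => add_le_add h <| finsum_le_finsum' (hasFiniteSupport_rampTerm x)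
    (hasFiniteSupport_rampTerm y) fun n => monotone_rampTerm (hm n) h

theorem le_rampMajorant (x : ℝ≥0) : x ≤ rampMajorant φ x :=
  le_self_add

theorem lt_rampMajorant_of_le {n : ℕ} {x : ℝ≥0} (h : n + 1 ≤ x) : φ n x < rampMajorant φ x :=
  calc φ n x < φ n x + 1 := lt_add_one _
    _ = rampTerm φ n x := (rampTerm_eq_of_le h).symm
    _ ≤ ∑ᶠ m : ℕ, rampTerm φ m x :=
      single_le_finsum n (hasFiniteSupport_rampTerm x) fun _ => zero_le
    _ ≤ rampMajorant φ x := le_add_self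

theorem eventually_lt_rampMajorant (n : ℕ) : ∀ᶠ x in atTop, φ n x < rampMajorant φ x :=
  (eventually_ge_atTop _).mono fun _ => lt_rampMajorant_of_le

theorem isLSControl_rampMajorant (hc : ∀ n, Continuous (φ n)) (hm : ∀ n, Monotone (φ n)) :
    IsLSControl (rampMajorant φ) :=
  ⟨continuous_rampMajorant hc, monotone_rampMajorant hm, .of_forall le_rampMajorant,
    tendsto_atTop_mono le_rampMajorant tendsto_id⟩

end RampMajorant

theorem exists_dominating_all_iterates_general (f : ℝ≥0 → ℝ≥0) (hf : IsLSControl f) :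
    ∃ g : ℝ≥0 → ℝ≥0, IsLSControl g ∧ ∀ n : ℕ, ∀ᶠ x in atTop, f^[n] x < g x := by
  obtain ⟨hc, hm, -, -⟩ := hf
  exact ⟨rampMajorant (f^[·]), isLSControl_rampMajorant hc.iterate hm.iterate,
    eventually_lt_rampMajorant⟩

/-- If a large-scale dim-control function is strictly bigger than the identity near
infinity, then some large-scale dim-control function eventually dominates all of
its iterates. -/
theorem exists_dominating_all_iterates (f : ℝ≥0 → ℝ≥0) (hf : IsLSControl f)
    (hgt : ∀ᶠ x in atTop, x < f x) :
    ∃ g : ℝ≥0 → ℝ≥0, IsLSControl g ∧ ∀ n : ℕ, ∀ᶠ x in atTop, f^[n] x < g x :=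
  exists_dominating_all_iterates_general f hf
end

section
/- Let S be a control semigroup that is mono-bounded at ∞ and let f be a bound function of S at ∞. Then there exists a metric space X such that asdim_{L({f} ∪ S)} X = 0 and asdim_S X > 0. -/
open Filter Set Metric Topology
open scoped NNReal ENNReal

/-- The control semigroup generated by a set `K` of large-scale dim-control functions:
the intersection of all control semigroups containing `K`. -/
def GenSemigroup (K : Set (ℝ≥0 → ℝ≥0)) : Set (ℝ≥0 → ℝ≥0) :=
  {g | ∀ S : Set (ℝ≥0 → ℝ≥0), IsControlSemigroup S → K ⊆ S → g ∈ S}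

/-!
The witness is a subset of `ℕ` made of arithmetic progressions (chains). The `k`-th chain has
step `E k = chainScale f c k` and length `m k * E k ≥ f (E k)`, where `m k = chainLength f c k`,
and `E (k + 1) = (m k + 2) * E k`, so every later chain consists of multiples of `E k`.
At scale `E k` the `k`-th chain is `E k`-connected, so any `E k`-disjoint cover has a member of
diameter at least `f (E k)`, more than any `g ∈ S` allows. Conversely, if `E k ≤ s < E (k + 1)`,
every point beyond `E (k + 1)` is a multiple of `E (k + 1)`, hence at distance at least
`E (k + 1) > s` from all other points, while the points up to `E (k + 1) ≤ 3 E k + f (E k) ≤ 4 f s`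
form one bounded set: `4 f` controls a dimension-zero cover.
-/

section ControlledDimension

variable {S : Set (ℝ≥0 → ℝ≥0)} {X : Type*} [MetricSpace X]

theorem asdim_eq_zero_of_asdimLE_zero (h : ASDimLE S X 0) : ASDim S X = 0 :=
  nonpos_iff_eq_zero.1 (sInf_le ⟨0, Nat.cast_zero.symm, h⟩)

theorem asdim_pos_of_not_asdimLE_zero (h : ¬ASDimLE S X 0) : 0 < ASDim S X := by
  refine zero_lt_one.trans_le (le_sInf ?_)
  rintro _ ⟨n, rfl, hn⟩
  exact Nat.one_le_cast.2 (Nat.pos_of_ne_zero (by rintro rfl; exact h hn))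

theorem asdimLE_zero_of_bounded_core {g : ℝ≥0 → ℝ≥0} (hg : g ∈ S) (s₀ : ℝ≥0)
    (h : ∀ s, s₀ ≤ s → ∃ A : Set X, (∀ x ∈ A, ∀ y ∈ A, dist x y ≤ g s) ∧
      ∀ x y, x ≠ y → y ∉ A → (s : ℝ) < dist x y) :
    ASDimLE S X 0 := by
  refine ⟨g, hg, s₀, fun s hs => ?_⟩
  obtain ⟨A, hA, hsep⟩ := h s hs
  refine ⟨fun _ => insert A (singleton '' Aᶜ), ?_, fun _ => ⟨?_, ?_⟩⟩
  · refine eq_univ_of_forall fun x => mem_iUnion.2 ⟨0, ?_⟩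
    by_cases hx : x ∈ A
    · exact ⟨A, mem_insert _ _, hx⟩
    · exact ⟨{x}, mem_insert_of_mem _ ⟨x, hx, rfl⟩, rfl⟩
  · rintro U (rfl | ⟨u, hu, rfl⟩) V (rfl | ⟨v, hv, rfl⟩) hUV x hx y hy
    · exact absurd rfl hUV
    · rw [mem_singleton_iff.1 hy]
      exact hsep x v (ne_of_mem_of_not_mem hx hv) hv
    · rw [mem_singleton_iff.1 hx, dist_comm]
      exact hsep y u (ne_of_mem_of_not_mem hy hu) hu
    · rw [mem_singleton_iff.1 hx, mem_singleton_iff.1 hy]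
      exact hsep u v (by rintro rfl; exact hUV rfl) hv
  · rintro U (rfl | ⟨u, -, rfl⟩)
    · exact ediam_le fun x hx y hy => edist_le_coe.2 (dist_le_coe.1 (hA x hx y hy))
    · exact ediam_singleton.trans_le zero_le

theorem SDisjoint.exists_forall_mem_of_chain {s : ℝ≥0} {𝒰 : Set (Set X)} (hd : SDisjoint s 𝒰)
    (hcover : ⋃₀ 𝒰 = univ) {p : ℕ → X} (hp : ∀ i, dist (p i) (p (i + 1)) ≤ s) :
    ∃ U ∈ 𝒰, ∀ i, p i ∈ U := by
  have hmem : ∀ x, ∃ U ∈ 𝒰, x ∈ U := fun x => mem_sUnion.1 (hcover ▸ mem_univ x)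
  obtain ⟨U, hU, hp0⟩ := hmem (p 0)
  refine ⟨U, hU, fun i => ?_⟩
  induction i with
  | zero => exact hp0
  | succ i ih =>
    obtain ⟨V, hV, hpV⟩ := hmem (p (i + 1))
    by_contra hnot
    exact (hp i).not_gt (hd U hU V hV (by rintro rfl; exact hnot hpV) _ ih _ hpV)

theorem not_asdimLE_zero_of_frequently_chain {h : ℝ≥0 → ℝ≥0}
    (hbound : ∀ g ∈ S, ∀ᶠ x in atTop, g x < h x)
    (hchain : ∃ᶠ s : ℝ≥0 in atTop, ∃ p : ℕ → X, (∀ i, dist (p i) (p (i + 1)) ≤ s) ∧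
      ∃ m, (h s : ℝ) ≤ dist (p 0) (p m)) :
    ¬ASDimLE S X 0 := by
  rintro ⟨g, hg, s₀, hcov⟩
  obtain ⟨s, ⟨p, hp, m, hm⟩, hs₀, hgs⟩ :=
    (hchain.and_eventually ((eventually_ge_atTop s₀).and (hbound g hg))).exists
  obtain ⟨𝒰, hcover, h𝒰⟩ := hcov s hs₀
  obtain ⟨U, hU, hpU⟩ := (h𝒰 0).1.exists_forall_mem_of_chain
    ((iSup_unique (ι := Fin 1) _).symm.trans hcover) hp
  have hdiam : dist (p 0) (p m) ≤ g s := dist_le_coe.2 (edist_le_coe.1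
    ((edist_le_ediam_of_mem (hpU 0) (hpU m)).trans ((h𝒰 0).2 U hU)))
  exact (hm.trans hdiam).not_gt (by exact_mod_cast hgs)

end ControlledDimension

theorem isLSControl_const_mul {a : ℝ≥0} (ha : 1 ≤ a) : IsLSControl (a * ·) :=
  ⟨continuous_const.mul continuous_id, fun _ _ h => mul_le_mul_right h a,
    Eventually.of_forall fun _ => le_mul_of_one_le_left zero_le ha,
    tendsto_atTop_mono (fun _ => le_mul_of_one_le_left zero_le ha) tendsto_id⟩

theorem const_mul_comp_mem_genSemigroup {K : Set (ℝ≥0 → ℝ≥0)} {f : ℝ≥0 → ℝ≥0} (hf : f ∈ K)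
    {a : ℝ≥0} (ha : 1 ≤ a) : (fun x => a * f x) ∈ GenSemigroup K := fun _ hT hKT =>
  hT.2.2 _ (hT.2.1 _ (isLSControl_const_mul ha) ⟨a, 0, .of_forall fun _ => (add_zero _).symm⟩)
    f (hKT hf)

theorem nat_dist_eq_sub {x y : ℕ} (h : x ≤ y) : dist x y = ((y - x : ℕ) : ℝ) := by
  rw [Nat.dist_eq, Nat.cast_sub h, abs_sub_comm, abs_of_nonneg (sub_nonneg.2 (by exact_mod_cast h))]

theorem nat_dist_le_of_le {x y n : ℕ} (hx : x ≤ n) (hy : y ≤ n) : dist x y ≤ n := by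
  rcases le_total x y with h | h
  · rw [nat_dist_eq_sub h]; exact_mod_cast (by omega)
  · rw [dist_comm, nat_dist_eq_sub h]; exact_mod_cast (by omega)

theorem le_nat_dist_of_le_sub {d x y : ℕ} (h : x ≤ y) (hd : d ≤ y - x) : (d : ℝ) ≤ dist x y := by
  rw [nat_dist_eq_sub h]; exact_mod_cast hd

theorem nat_dist_mul_min_succ_le (E m i : ℕ) : dist (E * min i m) (E * min (i + 1) m) ≤ E := by
  have hle : min i m ≤ min (i + 1) m := by omega
  have hstep : E * min (i + 1) m ≤ E * min i m + E := by
    rw [← mul_add_one]; gcongr; omega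
  rw [nat_dist_eq_sub (Nat.mul_le_mul_left E hle)]
  exact_mod_cast (by omega : E * min (i + 1) m - E * min i m ≤ E)

section ChainSpace

variable (f : ℝ≥0 → ℝ≥0) (c : ℕ)

noncomputable def chainScale : ℕ → ℕ
  | 0 => c
  | k + 1 => chainScale k * (⌈f (chainScale k) / chainScale k⌉₊ + 2)

noncomputable def chainLength (k : ℕ) : ℕ := ⌈f (chainScale f c k) / chainScale f c k⌉₊

def chainSpace : Set ℕ := {x | ∃ k j, j ≤ chainLength f c k ∧ x = chainScale f c k * j}

variable {f c}

theorem chainScale_succ (k : ℕ) :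
    chainScale f c (k + 1) = chainScale f c k * (chainLength f c k + 2) := rfl

theorem chainScale_pos (hc : 0 < c) : ∀ k, 0 < chainScale f c k
  | 0 => hc
  | k + 1 => Nat.mul_pos (chainScale_pos hc k) (by omega)

theorem chainScale_strictMono (hc : 0 < c) : StrictMono (chainScale f c) :=
  strictMono_nat_of_lt_succ fun k =>
    lt_mul_of_one_lt_right (chainScale_pos hc k) (by omega)

theorem chainScale_dvd_chainScale {k a : ℕ} (h : k ≤ a) :
    chainScale f c k ∣ chainScale f c a := by
  induction a, h using Nat.le_induction with
  | base => exact dvd_rfl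
  | succ a _ ih => exact ih.mul_right _

theorem le_chainLength_mul_chainScale (hc : 0 < c) (k : ℕ) :
    f (chainScale f c k) ≤ chainLength f c k * chainScale f c k :=
  (div_le_iff₀ (by exact_mod_cast chainScale_pos hc k)).1 (Nat.le_ceil _)

theorem chainScale_succ_le (hc : 0 < c) (k : ℕ) :
    (chainScale f c (k + 1) : ℝ≥0) ≤ f (chainScale f c k) + 3 * chainScale f c k := by
  have hE : (chainScale f c k : ℝ≥0) ≠ 0 := by exact_mod_cast (chainScale_pos hc k).ne'
  have hm : (chainLength f c k : ℝ≥0) * chainScale f c k ≤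
      f (chainScale f c k) + chainScale f c k :=
    calc (chainLength f c k : ℝ≥0) * chainScale f c k
        ≤ (f (chainScale f c k) / chainScale f c k + 1) * chainScale f c k := by
          gcongr; exact (Nat.ceil_lt_add_one zero_le).le
      _ = f (chainScale f c k) + chainScale f c k := by
          rw [add_mul, div_mul_cancel₀ _ hE, one_mul]
  calc (chainScale f c (k + 1) : ℝ≥0)
      = chainLength f c k * chainScale f c k + 2 * chainScale f c k := by
        rw [chainScale_succ]; push_cast; ring
    _ ≤ f (chainScale f c k) + chainScale f c k + 2 * chainScale f c k := by gcongr
    _ = f (chainScale f c k) + 3 * chainScale f c k := by ring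

theorem tendsto_chainScale (hc : 0 < c) :
    Tendsto (fun k => (chainScale f c k : ℝ≥0)) atTop atTop :=
  tendsto_natCast_atTop_atTop.comp (chainScale_strictMono hc).tendsto_atTop

theorem exists_chainScale_le_lt (hc : 0 < c) {s : ℝ≥0} (hs : (c : ℝ≥0) ≤ s) :
    ∃ k, (chainScale f c k : ℝ≥0) ≤ s ∧ s < chainScale f c (k + 1) := by
  have hmono : Monotone fun k => (chainScale f c k : ℝ≥0) :=
    fun _ _ h => Nat.cast_le.2 ((chainScale_strictMono hc).monotone h)
  have hunion := iUnion_Ico_map_succ_eq_Ici (fun k => hmono k.zero_le)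
    (not_bddAbove_of_tendsto_atTop (tendsto_chainScale (f := f) hc))
  have hs' : s ∈ Ici (chainScale f c ⊥ : ℝ≥0) := hs
  rw [← hunion] at hs'
  exact mem_iUnion.1 hs'

theorem le_chainScale_or_dvd_of_mem_chainSpace (hc : 0 < c) {x : ℕ} (hx : x ∈ chainSpace f c)
    (k : ℕ) : x ≤ chainScale f c k ∨ chainScale f c k ∣ x := by
  obtain ⟨a, j, hj, rfl⟩ := hx
  rcases lt_or_ge a k with hak | hka
  · left
    calc chainScale f c a * j ≤ chainScale f c (a + 1) := by rw [chainScale_succ]; gcongr; omega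
      _ ≤ chainScale f c k := (chainScale_strictMono hc).monotone hak
  · exact Or.inr ((chainScale_dvd_chainScale hka).mul_right j)

theorem chainScale_le_dist (hc : 0 < c) {k x y : ℕ} (hx : x ∈ chainSpace f c)
    (hy : y ∈ chainSpace f c) (hxy : x ≠ y) (hyk : chainScale f c k < y) :
    (chainScale f c k : ℝ) ≤ dist x y := by
  have hEy := (le_chainScale_or_dvd_of_mem_chainSpace hc hy k).resolve_left hyk.not_ge
  rcases le_chainScale_or_dvd_of_mem_chainSpace hc hx k with hxk | hEx
  · refine le_nat_dist_of_le_sub (hxk.trans hyk.le) ?_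
    have := Nat.le_of_dvd (Nat.sub_pos_of_lt hyk) (Nat.dvd_sub hEy dvd_rfl)
    omega
  · rcases hxy.lt_or_gt with h | h
    · exact le_nat_dist_of_le_sub h.le (Nat.le_of_dvd (Nat.sub_pos_of_lt h) (Nat.dvd_sub hEy hEx))
    · rw [dist_comm]
      exact le_nat_dist_of_le_sub h.le (Nat.le_of_dvd (Nat.sub_pos_of_lt h) (Nat.dvd_sub hEx hEy))

theorem asdimLE_zero_chainSpace (hc : 0 < c) (hmono : Monotone f)
    (hfc : ∀ x, (c : ℝ≥0) ≤ x → x ≤ f x) {K : Set (ℝ≥0 → ℝ≥0)} (hfK : f ∈ K) :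
    ASDimLE (GenSemigroup K) (chainSpace f c) 0 := by
  refine asdimLE_zero_of_bounded_core (const_mul_comp_mem_genSemigroup hfK (a := 4) (by norm_num))
    c fun s hs => ?_
  obtain ⟨k, hks, hsk⟩ := exists_chainScale_le_lt (f := f) hc hs
  have hbound : (chainScale f c (k + 1) : ℝ≥0) ≤ 4 * f s :=
    calc (chainScale f c (k + 1) : ℝ≥0) ≤ f (chainScale f c k) + 3 * chainScale f c k :=
          chainScale_succ_le hc k
      _ ≤ f s + 3 * f s := by gcongr; exacts [hmono hks, hks.trans (hfc s hs)]
      _ = 4 * f s := by ring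
  refine ⟨{x | (x : ℕ) ≤ chainScale f c (k + 1)}, fun x hx y hy => ?_, fun x y hxy hy => ?_⟩
  · rw [Subtype.dist_eq]
    exact (nat_dist_le_of_le hx hy).trans (by exact_mod_cast hbound)
  · rw [Subtype.dist_eq]
    refine lt_of_lt_of_le (by exact_mod_cast hsk) (chainScale_le_dist hc x.2 y.2 ?_ (not_le.1 hy))
    exact fun h => hxy (Subtype.ext h)

theorem not_asdimLE_zero_chainSpace (hc : 0 < c) {S : Set (ℝ≥0 → ℝ≥0)}
    (hbound : ∀ g ∈ S, ∀ᶠ x in atTop, g x < f x) : ¬ASDimLE S (chainSpace f c) 0 := by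
  refine not_asdimLE_zero_of_frequently_chain hbound
    ((tendsto_chainScale (f := f) hc).frequently (Frequently.of_forall fun k => ?_))
  let p : ℕ → chainSpace f c := fun i =>
    ⟨chainScale f c k * min i (chainLength f c k), k, _, min_le_right _ _, rfl⟩
  refine ⟨p, fun i => nat_dist_mul_min_succ_le _ _ i, chainLength f c k, ?_⟩
  rw [Subtype.dist_eq]
  simp only [p, min_self, Nat.zero_min, mul_zero]
  rw [nat_dist_eq_sub (Nat.zero_le _), Nat.sub_zero, mul_comm]
  exact_mod_cast le_chainLength_mul_chainScale hc k

end ChainSpace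

theorem exists_space_distinguishing_monobounded_general (S : Set (ℝ≥0 → ℝ≥0))
    (f : ℝ≥0 → ℝ≥0) (hf : IsLSControl f)
    (hbound : ∀ g ∈ S, ∀ᶠ x in atTop, g x < f x) :
    ∃ (X : Type) (mX : MetricSpace X),
      @ASDim (GenSemigroup (insert f S)) X mX = 0 ∧ 0 < @ASDim S X mX := by
  obtain ⟨x₀, hx₀⟩ := eventually_atTop.1 hf.2.2.1
  have hc : 0 < ⌈x₀⌉₊ + 1 := Nat.succ_pos _
  have hfc : ∀ x, ((⌈x₀⌉₊ + 1 : ℕ) : ℝ≥0) ≤ x → x ≤ f x := fun x hx =>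
    hx₀ x ((Nat.le_ceil x₀).trans ((Nat.cast_le.2 (Nat.le_succ _)).trans hx))
  exact ⟨chainSpace f (⌈x₀⌉₊ + 1), inferInstance,
    asdim_eq_zero_of_asdimLE_zero (asdimLE_zero_chainSpace hc hf.2.1 hfc (mem_insert f S)),
    asdim_pos_of_not_asdimLE_zero (not_asdimLE_zero_chainSpace hc hbound)⟩

/-- If `S` is mono-bounded at infinity with bound function `f`, then there is a
metric space `X` with `asdim_{L({f} ∪ S)} X = 0` but `asdim_S X > 0`. -/
theorem exists_space_distinguishing_monobounded (S : Set (ℝ≥0 → ℝ≥0))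
    (hS : IsControlSemigroup S) (f : ℝ≥0 → ℝ≥0) (hf : IsLSControl f)
    (hbound : ∀ g ∈ S, ∀ᶠ x in atTop, g x < f x) :
    ∃ (X : Type) (mX : MetricSpace X),
      @ASDim (GenSemigroup (insert f S)) X mX = 0 ∧ 0 < @ASDim S X mX :=
  exists_space_distinguishing_monobounded_general S f hf hbound
end

section
/- There exists a family (S_α) of control semigroups indexed by the ordinals α ≤ ω₁, where ω₁ is the first uncountable ordinal, such that: (i) for all α < β ≤ ω₁, S_β ⪯ S_α but not S_α ⪯ S_β; (ii) for all α < β ≤ ω₁ there exists a metric space X with asdim_{S_α} X ≠ asdim_{S_β} X (so the map α ↦ S_α is injective into the quotient of control semigroups by dim-equivalence, and order-reversing); and (iii) for every α < ω₁, the semigroup S_α is mono-bounded at ∞. -/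
/-!
For `α ≤ ω₁` let `S α` consist of the control functions eventually bounded by a composite of
affine maps, squaring and the functions `g β` for `β < α`, where `g α` is chosen by transfinite
recursion to be a control function eventually above every such composite; this is possible
for countable `α`, as there are then only countably many composites. For `α < β` we get
`g α ∈ S β` while `g α` eventually dominates all of `S α`, which gives (i) and (iii).

For (ii) take `X ⊆ ℕ` the union of blocks, block `n` an arithmetic progression of step `n + 1`
and diameter at least `g α (n + 2)`, the gaps between blocks growing with `n`. At scale
`s = n + 1` block `n` is `s`-chained, so it must lie in one set of any `s`-disjoint cover, of
diameter exceeding `f s` for every `f ∈ S α`. At scale `s`, the first `⌊s⌋` blocks form a set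
of diameter at most `(3 (g α (s + 1) + 1))²` and all other points are `s`-separated, so
`asdim_{S β} X = 0`.
-/

open Filter Set Metric Topology
open scoped NNReal ENNReal

/-- A control semigroup is mono-bounded at infinity if some large-scale dim-control
function eventually strictly dominates all its members. -/
def MonoBounded (S : Set (ℝ≥0 → ℝ≥0)) : Prop :=
  ∃ f : ℝ≥0 → ℝ≥0, IsLSControl f ∧ ∀ g ∈ S, ∀ᶠ x in atTop, g x < f x

theorem isLSControl_of_eventually_le {f : ℝ≥0 → ℝ≥0} (hc : Continuous f) (hm : Monotone f)
    (hle : ∀ᶠ x in atTop, x ≤ f x) : IsLSControl f :=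
  ⟨hc, hm, hle, tendsto_atTop_mono' atTop hle tendsto_id⟩

theorem isLSControl_id : IsLSControl id :=
  isLSControl_of_eventually_le continuous_id monotone_id (.of_forall fun _ => le_rfl)

theorem IsLSControl.comp {f g : ℝ≥0 → ℝ≥0} (hf : IsLSControl f) (hg : IsLSControl g) :
    IsLSControl (f ∘ g) := by
  refine ⟨hf.1.comp hg.1, hf.2.1.comp hg.2.1, ?_, hf.2.2.2.comp hg.2.2.2⟩
  filter_upwards [hg.2.2.1, hg.2.2.2.eventually hf.2.2.1] with x hgx hfgx
  exact hgx.trans hfgx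

def affineControl (n : ℕ) (x : ℝ≥0) : ℝ≥0 := (n + 1) * (x + 1)

theorem isLSControl_affineControl (n : ℕ) : IsLSControl (affineControl n) := by
  refine isLSControl_of_eventually_le (by unfold affineControl; fun_prop) (fun x y hxy => ?_)
    (.of_forall fun x => ?_)
  · unfold affineControl; gcongr
  · calc x ≤ 1 * (x + 1) := by rw [one_mul]; exact le_self_add
      _ ≤ affineControl n x := by unfold affineControl; gcongr; exact le_add_self

theorem affine_le_affineControl (a b x : ℝ≥0) : a * x + b ≤ affineControl ⌈a + b⌉₊ x :=
  calc a * x + b ≤ (a * x + b) + (a + b * x) := le_self_add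
    _ = (a + b) * (x + 1) := by ring
    _ ≤ affineControl ⌈a + b⌉₊ x := by
      unfold affineControl; gcongr ?_ * _; exact (Nat.le_ceil _).trans le_self_add

theorem isLSControl_sq : IsLSControl (fun x : ℝ≥0 => x * x) := by
  refine isLSControl_of_eventually_le (by fun_prop) (fun x y hxy => mul_le_mul' hxy hxy) ?_
  filter_upwards [eventually_ge_atTop 1] with x hx
  exact le_mul_of_one_le_right' hx

inductive IsComposite (T : Set (ℝ≥0 → ℝ≥0)) : (ℝ≥0 → ℝ≥0) → Prop
  | id : IsComposite T id
  | comp {f w : ℝ≥0 → ℝ≥0} : f ∈ T → IsComposite T w → IsComposite T (f ∘ w)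

namespace IsComposite

variable {T T' : Set (ℝ≥0 → ℝ≥0)} {f w w' : ℝ≥0 → ℝ≥0}

theorem of_mem (hf : f ∈ T) : IsComposite T f := comp hf id

theorem trans (hw : IsComposite T w) (hw' : IsComposite T w') : IsComposite T (w ∘ w') := by
  induction hw with
  | id => exact hw'
  | comp hf _ ih => exact comp (w := _ ∘ w') hf ih

theorem mono (h : T ⊆ T') (hw : IsComposite T w) : IsComposite T' w := by
  induction hw with
  | id => exact id
  | comp hf _ ih => exact comp (h hf) ih

theorem isLSControl (hT : ∀ f ∈ T, IsLSControl f) (hw : IsComposite T w) : IsLSControl w := by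
  induction hw with
  | id => exact isLSControl_id
  | comp hf _ ih => exact (hT _ hf).comp ih

theorem countable_setOf (hT : T.Countable) : {w | IsComposite T w}.Countable := by
  have := hT.to_subtype
  refine (countable_range fun l : List T => (l.map (↑)).foldr (· ∘ ·) _root_.id).mono ?_
  intro w hw
  induction hw with
  | id => exact ⟨[], rfl⟩
  | @comp f _ hf _ ih =>
    obtain ⟨l, rfl⟩ := ih
    exact ⟨⟨f, hf⟩ :: l, rfl⟩

end IsComposite

/-- A sum of ramps, the `j`-th rising from `0` to `c j` on `[j - 1, j]`. -/
noncomputable def rampSum (c : ℕ → ℝ≥0) (x : ℝ≥0) : ℝ≥0 :=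
  ∑ j ∈ Finset.range ⌈x + 1⌉₊, min 1 (x + 1 - j) * c j

theorem rampSum_eq_sum_range (c : ℕ → ℝ≥0) {x : ℝ≥0} {N : ℕ} (hN : x + 1 ≤ N) :
    rampSum c x = ∑ j ∈ Finset.range N, min 1 (x + 1 - j) * c j := by
  refine Finset.sum_subset (Finset.range_subset_range.2 (Nat.ceil_le.2 hN)) fun j _ hj => ?_
  have : x + 1 ≤ j := Nat.ceil_le.1 (not_lt.1 (Finset.mem_range.not.1 hj))
  rw [tsub_eq_zero_of_le this, min_eq_right zero_le_one, zero_mul]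

theorem rampSum_monotone (c : ℕ → ℝ≥0) : Monotone (rampSum c) := by
  intro x y hxy
  have hy : y + 1 ≤ ⌈y + 1⌉₊ := Nat.le_ceil _
  rw [rampSum_eq_sum_range c ((by gcongr : x + 1 ≤ y + 1).trans hy), rampSum_eq_sum_range c hy]
  gcongr

theorem rampSum_continuous (c : ℕ → ℝ≥0) : Continuous (rampSum c) := by
  refine continuous_iff_continuousAt.2 fun x => ?_
  have hsum : Continuous fun y : ℝ≥0 =>
      ∑ j ∈ Finset.range (⌈x⌉₊ + 2), min 1 (y + 1 - j) * c j := by fun_prop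
  have hx : x < ⌈x⌉₊ + 1 := (Nat.le_ceil x).trans_lt (lt_add_one _)
  refine hsum.continuousAt.congr (eventuallyEq_of_mem (Iio_mem_nhds hx) fun y hy => ?_)
  refine (rampSum_eq_sum_range c ?_).symm
  calc y + 1 ≤ (⌈x⌉₊ + 1) + 1 := by gcongr; exact hy.le
    _ = ((⌈x⌉₊ + 2 : ℕ) : ℝ≥0) := by push_cast; ring

theorem le_rampSum (c : ℕ → ℝ≥0) {x : ℝ≥0} {j : ℕ} (hj : (j : ℝ≥0) ≤ x) : c j ≤ rampSum c x := by
  have hj' : j ∈ Finset.range ⌈x + 1⌉₊ :=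
    Finset.mem_range.2 (Nat.lt_ceil.2 (hj.trans_lt (lt_add_one x)))
  have hramp : min 1 (x + 1 - j) = 1 := min_eq_left (le_tsub_of_add_le_left (by gcongr))
  calc c j = min 1 (x + 1 - j) * c j := by rw [hramp, one_mul]
    _ ≤ rampSum c x := Finset.single_le_sum (f := fun k : ℕ => min 1 (x + 1 - k) * c k)
        (fun _ _ => zero_le) hj'

theorem exists_isLSControl_eventually_gt (e : ℕ → ℝ≥0 → ℝ≥0) :
    ∃ d, IsLSControl d ∧ ∀ i, Monotone (e i) → ∀ᶠ x in atTop, e i x < d x := by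
  set c : ℕ → ℝ≥0 := fun j => j + 1 + ∑ i ∈ Finset.range (j + 1), e i (j + 1)
  have hfloor (x : ℝ≥0) : x < ⌊x⌋₊ + 1 ∧ c ⌊x⌋₊ ≤ rampSum c x :=
    ⟨Nat.lt_floor_add_one x, le_rampSum c (Nat.floor_le x.2)⟩
  refine ⟨rampSum c, isLSControl_of_eventually_le (rampSum_continuous c) (rampSum_monotone c)
    (.of_forall fun x => ?_), fun i hi => ?_⟩
  · exact (hfloor x).1.le.trans (le_self_add.trans (hfloor x).2)
  · filter_upwards [eventually_ge_atTop (i : ℝ≥0)] with x hx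
    have hi' : i ∈ Finset.range (⌊x⌋₊ + 1) :=
      Finset.mem_range.2 (Nat.lt_succ_of_le (Nat.le_floor hx))
    calc e i x ≤ e i (⌊x⌋₊ + 1) := hi (hfloor x).1.le
      _ ≤ ∑ i ∈ Finset.range (⌊x⌋₊ + 1), e i (⌊x⌋₊ + 1) :=
        Finset.single_le_sum (f := fun i => e i (⌊x⌋₊ + 1)) (fun _ _ => zero_le) hi'
      _ < c ⌊x⌋₊ := by simp only [c]; exact lt_add_of_pos_left _ (by positivity)
      _ ≤ rampSum c x := (hfloor x).2

theorem Set.Countable.monoBounded {F : Set (ℝ≥0 → ℝ≥0)} (hF : F.Countable)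
    (hmono : ∀ f ∈ F, Monotone f) : MonoBounded F := by
  obtain ⟨e, hFe⟩ := countable_iff_exists_subset_range.1 hF
  obtain ⟨d, hd, hlt⟩ := exists_isLSControl_eventually_gt e
  refine ⟨d, hd, fun f hf => ?_⟩
  obtain ⟨i, rfl⟩ := hFe hf
  exact hlt i (hmono _ hf)

def generators (T : Set (ℝ≥0 → ℝ≥0)) : Set (ℝ≥0 → ℝ≥0) :=
  insert (fun x => x * x) (range affineControl ∪ T)

theorem isLSControl_of_mem_generators {T : Set (ℝ≥0 → ℝ≥0)} (hT : ∀ f ∈ T, IsLSControl f) :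
    ∀ f ∈ generators T, IsLSControl f := by
  rintro f (rfl | ⟨n, rfl⟩ | hf)
  · exact isLSControl_sq
  · exact isLSControl_affineControl n
  · exact hT f hf

theorem Set.Countable.generators {T : Set (ℝ≥0 → ℝ≥0)} (hT : T.Countable) :
    (generators T).Countable :=
  ((countable_range _).union hT).insert _

/-- A witness of `MonoBounded F`; junk if `F` is not mono-bounded. -/
noncomputable def dominator (F : Set (ℝ≥0 → ℝ≥0)) : ℝ≥0 → ℝ≥0 :=
  Classical.epsilon fun d => IsLSControl d ∧ ∀ f ∈ F, ∀ᶠ x in atTop, f x < d x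

theorem MonoBounded.dominator_spec {F : Set (ℝ≥0 → ℝ≥0)} (h : MonoBounded F) :
    IsLSControl (dominator F) ∧ ∀ f ∈ F, ∀ᶠ x in atTop, f x < dominator F x :=
  Classical.epsilon_spec h

noncomputable def ordinalScale : Ordinal.{0} → ℝ≥0 → ℝ≥0 :=
  Ordinal.lt_wf.fix fun α scale =>
    dominator {w | IsComposite (generators (range fun β : Iio α => scale β β.2)) w}

theorem ordinalScale_eq (α : Ordinal.{0}) :
    ordinalScale α = dominator {w | IsComposite (generators (ordinalScale '' Iio α)) w} := by
  rw [ordinalScale, WellFounded.fix_eq, image_eq_range]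

theorem countable_Iio_of_lt_ord_aleph_one {α : Ordinal.{0}} (hα : α < (Cardinal.aleph 1).ord) :
    (Iio α).Countable := by
  rw [← Cardinal.le_aleph0_iff_set_countable, Cardinal.mk_Iio_ordinal, Cardinal.lift_le_aleph0,
    ← Cardinal.lt_aleph_one_iff]
  exact Cardinal.lt_ord.1 hα

theorem ordinalScale_spec {α : Ordinal.{0}} (hα : α < (Cardinal.aleph 1).ord) :
    IsLSControl (ordinalScale α) ∧ ∀ w, IsComposite (generators (ordinalScale '' Iio α)) w →
      ∀ᶠ x in atTop, w x < ordinalScale α x := by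
  induction α using WellFoundedLT.induction with
  | ind α ih =>
    have hgen : ∀ f ∈ generators (ordinalScale '' Iio α), IsLSControl f :=
      isLSControl_of_mem_generators <| by
        rintro _ ⟨β, hβ, rfl⟩
        exact (ih β hβ (lt_trans hβ hα)).1
    have hcount := ((countable_Iio_of_lt_ord_aleph_one hα).image ordinalScale).generators
    rw [ordinalScale_eq]
    exact (IsComposite.countable_setOf hcount |>.monoBounded
      fun w hw => (IsComposite.isLSControl hgen hw).2.1).dominator_spec

theorem IsComposite.isLSControl_of_le_ord_aleph_one {α : Ordinal.{0}} {w : ℝ≥0 → ℝ≥0}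
    (hα : α ≤ (Cardinal.aleph 1).ord) (hw : IsComposite (generators (ordinalScale '' Iio α)) w) :
    IsLSControl w := by
  refine hw.isLSControl (isLSControl_of_mem_generators ?_)
  rintro _ ⟨β, hβ, rfl⟩
  exact (ordinalScale_spec (lt_of_lt_of_le hβ hα)).1

def controlSemigroup (α : Ordinal.{0}) : Set (ℝ≥0 → ℝ≥0) :=
  {h | IsLSControl h ∧ ∃ w, IsComposite (generators (ordinalScale '' Iio α)) w ∧ h ≤ᶠ[atTop] w}

theorem Filter.EventuallyLE.comp_of_monotone {α β γ : Type*} [Preorder β] [Preorder γ]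
    {l : Filter α} {l' : Filter β} {f w : β → γ} {g v : α → β} (hf : f ≤ᶠ[l'] w)
    (hg : g ≤ᶠ[l] v) (hgl : Tendsto g l l') (hw : Monotone w) : f ∘ g ≤ᶠ[l] w ∘ v := by
  filter_upwards [hg, hgl.eventually hf] with x hgx hfgx
  exact hfgx.trans (hw hgx)

theorem isControlSemigroup_controlSemigroup {α : Ordinal.{0}} (hα : α ≤ (Cardinal.aleph 1).ord) :
    IsControlSemigroup (controlSemigroup α) := by
  refine ⟨fun f hf => hf.1, ?_, ?_⟩
  · rintro f hf ⟨a, b, hab⟩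
    refine ⟨hf, _, .of_mem (mem_insert_of_mem _ (.inl ⟨⌈a + b⌉₊, rfl⟩)), ?_⟩
    filter_upwards [hab] with x hx
    exact hx ▸ affine_le_affineControl a b x
  · rintro f ⟨hf, w, hw, hfw⟩ g ⟨hg, v, hv, hgv⟩
    exact ⟨hf.comp hg, w ∘ v, hw.trans hv,
      hfw.comp_of_monotone hgv hg.2.2.2 (hw.isLSControl_of_le_ord_aleph_one hα).2.1⟩

theorem controlSemigroup_mono {α β : Ordinal.{0}} (h : α ≤ β) :
    controlSemigroup α ⊆ controlSemigroup β := by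
  rintro f ⟨hf, w, hw, hfw⟩
  refine ⟨hf, w, hw.mono ?_, hfw⟩
  exact insert_subset_insert (union_subset_union_right _ (image_mono (Iio_subset_Iio h)))

theorem IsComposite.mem_controlSemigroup {α : Ordinal.{0}} {w : ℝ≥0 → ℝ≥0}
    (hα : α ≤ (Cardinal.aleph 1).ord) (hw : IsComposite (generators (ordinalScale '' Iio α)) w) :
    w ∈ controlSemigroup α :=
  ⟨hw.isLSControl_of_le_ord_aleph_one hα, w, hw, .of_forall fun _ => le_rfl⟩

theorem eventually_lt_ordinalScale {α : Ordinal.{0}} (hα : α < (Cardinal.aleph 1).ord)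
    {f : ℝ≥0 → ℝ≥0} (hf : f ∈ controlSemigroup α) : ∀ᶠ x in atTop, f x < ordinalScale α x := by
  obtain ⟨-, w, hw, hfw⟩ := hf
  filter_upwards [hfw, (ordinalScale_spec hα).2 w hw] with x h1 h2
  exact h1.trans_lt h2

theorem preceq_of_subset {S₁ S₂ : Set (ℝ≥0 → ℝ≥0)} (h : S₂ ⊆ S₁) : Preceq S₁ S₂ :=
  fun f hf => ⟨f, h hf, .of_forall fun _ => le_rfl⟩

theorem not_preceq_of_eventually_lt {S₁ S₂ : Set (ℝ≥0 → ℝ≥0)} {d : ℝ≥0 → ℝ≥0} (hd : d ∈ S₂)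
    (hlt : ∀ g ∈ S₁, ∀ᶠ x in atTop, g x < d x) : ¬Preceq S₁ S₂ := by
  intro h
  obtain ⟨g, hg, hdg⟩ := h d hd
  obtain ⟨x, hle, hgt⟩ := (hdg.and (hlt g hg)).exists
  exact hgt.not_ge hle

section ZeroDimensional

variable {S : Set (ℝ≥0 → ℝ≥0)} {X : Type*} [MetricSpace X]

theorem asdim_eq_zero_iff : ASDim S X = 0 ↔ ASDimLE S X 0 := by
  refine ⟨fun h => ?_, fun h => nonpos_iff_eq_zero.1 (sInf_le ⟨0, rfl, h⟩)⟩
  by_contra hS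
  have : (1 : ℕ∞) ≤ ASDim S X := by
    refine le_sInf ?_
    rintro _ ⟨n, rfl, hn⟩
    exact Nat.one_le_cast.2 (Nat.pos_of_ne_zero fun h0 => hS (h0 ▸ hn))
  simp [h] at this

/-- The cover is `A s` together with the singletons outside it. -/
theorem asdimLE_zero_of_eventually {f : ℝ≥0 → ℝ≥0} (hf : f ∈ S) (A : ℝ≥0 → Set X)
    (h : ∀ᶠ s in atTop, ediam (A s) ≤ f s ∧ ∀ x y, y ∉ A s → x ≠ y → (s : ℝ) < dist x y) :
    ASDimLE S X 0 := by
  obtain ⟨s₀, hs₀⟩ := eventually_atTop.1 h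
  refine ⟨f, hf, s₀, fun s hs => ?_⟩
  obtain ⟨hdiam, hsep⟩ := hs₀ s hs
  refine ⟨fun _ => insert (A s) ((fun p => {p}) '' (A s)ᶜ), ?_, fun _ => ⟨?_, ?_⟩⟩
  · refine eq_univ_of_forall fun p => mem_iUnion.2 ⟨0, ?_⟩
    by_cases hp : p ∈ A s
    · exact ⟨A s, mem_insert _ _, hp⟩
    · exact ⟨{p}, mem_insert_of_mem _ ⟨p, hp, rfl⟩, rfl⟩
  · rintro U hU V hV hUV x hx y hy
    rcases hU with rfl | ⟨p, hp, rfl⟩ <;> rcases hV with rfl | ⟨q, hq, rfl⟩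
    · exact absurd rfl hUV
    · exact hsep x y (hy ▸ hq) (by rintro rfl; exact (hy ▸ hq) hx)
    · rw [dist_comm]
      exact hsep y x (hx ▸ hp) (by rintro rfl; exact (hx ▸ hp) hy)
    · rw [mem_singleton_iff.1 hx, mem_singleton_iff.1 hy]
      exact hsep p q hq (by rintro rfl; exact hUV rfl)
  · rintro U (rfl | ⟨p, -, rfl⟩)
    · exact hdiam
    · exact ediam_singleton.trans_le zero_le

theorem SDisjoint.mem_of_reflTransGen {s : ℝ≥0} {𝒰 : Set (Set X)} (h𝒰 : SDisjoint s 𝒰)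
    (hcov : ∀ x, ∃ V ∈ 𝒰, x ∈ V) {U : Set X} (hU : U ∈ 𝒰) {x y : X} (hx : x ∈ U)
    (hxy : Relation.ReflTransGen (fun a b => dist a b ≤ s) x y) : y ∈ U := by
  induction hxy with
  | refl => exact hx
  | tail _ hbc ih =>
    obtain ⟨V, hV, hc⟩ := hcov _
    by_cases hVU : V = U
    · exact hVU ▸ hc
    · exact absurd hbc (h𝒰 U hU V hV (Ne.symm hVU) _ ih _ hc).not_ge

theorem not_asdimLE_zero_of_frequently
    (h : ∀ f ∈ S, ∃ᶠ s : ℝ≥0 in atTop, ∃ x y : X,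
      Relation.ReflTransGen (fun a b => dist a b ≤ s) x y ∧ (f s : ℝ) < dist x y) :
    ¬ASDimLE S X 0 := by
  rintro ⟨f, hf, s₀, H⟩
  obtain ⟨s, hs, x, y, hxy, hfar⟩ := frequently_atTop.1 (h f hf) s₀
  obtain ⟨𝒰, hcov, h𝒰⟩ := H s hs
  have hcov₀ (z : X) : ∃ V ∈ 𝒰 0, z ∈ V := by
    have hz : z ∈ ⋃ i, ⋃₀ 𝒰 i := hcov ▸ mem_univ z
    obtain ⟨i, V, hV, hz⟩ := mem_iUnion.1 hz
    exact ⟨V, Fin.fin_one_eq_zero i ▸ hV, hz⟩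
  obtain ⟨U, hU, hx⟩ := hcov₀ x
  have hy := (h𝒰 0).1.mem_of_reflTransGen hcov₀ hU hx hxy
  have : edist x y ≤ f s := (edist_le_ediam_of_mem hx hy).trans ((h𝒰 0).2 U hU)
  exact hfar.not_ge (NNReal.coe_le_coe.2 (edist_le_coe.1 this))

end ZeroDimensional

theorem natCast_le_dist_of_add_le {a b c : ℕ} (h : a + c ≤ b) : (c : ℝ) ≤ dist a b := by
  rw [Nat.dist_eq, abs_sub_comm]
  exact (le_sub_iff_add_le'.2 (by exact_mod_cast h)).trans (le_abs_self _)

namespace BlockSpace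

variable (g : ℝ≥0 → ℝ≥0)

/-- Block `n` has `length g n + 1` points spaced `n + 1` apart, so its diameter is at least
`g (n + 2)`, and it is preceded by a gap of `n + 1`. -/
noncomputable def length (n : ℕ) : ℕ := ⌈g (n + 2) / (n + 1)⌉₊

noncomputable def start : ℕ → ℕ
  | 0 => 0
  | n + 1 => start n + length g n * (n + 1) + (n + 2)

noncomputable def point (n k : ℕ) : ℕ := start g n + k * (n + 1)

end BlockSpace

open BlockSpace in
def blockSpace (g : ℝ≥0 → ℝ≥0) : Set ℕ := {x | ∃ n, ∃ k ≤ length g n, x = point g n k}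

namespace BlockSpace

variable {g : ℝ≥0 → ℝ≥0}

theorem le_length_mul (n : ℕ) : g (n + 2) ≤ length g n * (n + 1) :=
  (div_le_iff₀ (by positivity)).1 (Nat.le_ceil _)

theorem length_mul_le (n : ℕ) : (length g n : ℝ≥0) * (n + 1) ≤ g (n + 2) + (n + 1) := by
  have := (Nat.ceil_lt_add_one (zero_le : 0 ≤ g (n + 2) / (n + 1))).le
  calc (length g n : ℝ≥0) * (n + 1) ≤ (g (n + 2) / (n + 1) + 1) * (n + 1) := by
        gcongr; exact this
    _ = g (n + 2) + (n + 1) := by rw [add_mul, one_mul, div_mul_cancel₀ _ (by positivity)]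

theorem point_add_le_start {n k m : ℕ} (hk : k ≤ length g n) (hnm : n < m) :
    point g n k + (m + 1) ≤ start g m := by
  induction m, hnm using Nat.le_induction with
  | base =>
    have := Nat.mul_le_mul_right (n + 1) hk
    simp only [point, start]
    omega
  | succ m _ ih =>
    simp only [start]
    omega

theorem add_le_point_of_lt {x m l : ℕ} (hx : x ∈ blockSpace g) (hl : l ≤ length g m)
    (hxy : x < point g m l) : x + (m + 1) ≤ point g m l := by
  obtain ⟨n, k, hk, rfl⟩ := hx
  rcases lt_trichotomy n m with hnm | rfl | hmn
  · exact (point_add_le_start hk hnm).trans (Nat.le_add_right _ _)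
  · have hkl : k < l := Nat.lt_of_mul_lt_mul_right (Nat.lt_of_add_lt_add_left hxy)
    have := Nat.mul_le_mul_right (n + 1) hkl
    simp only [point] at hxy ⊢
    nlinarith
  · have := point_add_le_start hl hmn
    simp only [point] at hxy this
    omega

theorem add_le_of_lt_of_start_le {x y N : ℕ} (hx : x ∈ blockSpace g) (hy : y ∈ blockSpace g)
    (hxy : x < y) (hN : start g N ≤ y) : x + (N + 1) ≤ y := by
  obtain ⟨m, l, hl, rfl⟩ := hy
  have hNm : N ≤ m := by
    by_contra! hmN
    have := point_add_le_start hl hmN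
    omega
  have := add_le_point_of_lt hx hl hxy
  omega

theorem start_le (hg : Monotone g) (N : ℕ) :
    (start g N : ℝ≥0) ≤ N * (g (N + 1) + 2 * N + 1) := by
  induction N with
  | zero => simp [start]
  | succ N ih =>
    have hG : g (N + 1) ≤ g (N + 2) := hg (by gcongr; norm_num)
    have hL := length_mul_le (g := g) N
    rw [start]
    push_cast
    rw [show (N : ℝ≥0) + 1 + 1 = N + 2 by ring, ← NNReal.coe_le_coe]
    rw [← NNReal.coe_le_coe] at ih hG hL
    push_cast at ih hG hL ⊢
    nlinarith

theorem start_floor_le (hg : Monotone g) {s : ℝ≥0} (hs : s + 1 ≤ g (s + 1)) :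
    (start g ⌊s⌋₊ : ℝ≥0) ≤ ((fun x => x * x) ∘ affineControl 2 ∘ g ∘ affineControl 0) s := by
  have hN : (⌊s⌋₊ : ℝ≥0) ≤ s := Nat.floor_le zero_le
  have hG : g (⌊s⌋₊ + 1) ≤ g (s + 1) := hg (by gcongr)
  calc (start g ⌊s⌋₊ : ℝ≥0) ≤ ⌊s⌋₊ * (g (⌊s⌋₊ + 1) + 2 * ⌊s⌋₊ + 1) := start_le hg _
    _ ≤ s * (g (s + 1) + 2 * s + 1) := by gcongr
    _ ≤ (3 * (g (s + 1) + 1)) * (3 * (g (s + 1) + 1)) := by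
      rw [← NNReal.coe_le_coe] at hs ⊢
      push_cast at hs ⊢
      nlinarith [s.coe_nonneg]
    _ = _ := by simp [affineControl]; norm_num

theorem point_mem {n k : ℕ} (hk : k ≤ length g n) : point g n k ∈ blockSpace g := ⟨n, k, hk, rfl⟩

theorem reflTransGen_point {n k : ℕ} (hk : k ≤ length g n) {s : ℝ} (hs : (n : ℝ) + 1 ≤ s) :
    Relation.ReflTransGen (fun a b : blockSpace g => dist a b ≤ s)
      ⟨point g n 0, point_mem (Nat.zero_le _)⟩ ⟨point g n k, point_mem hk⟩ := by
  induction k with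
  | zero => exact .refl
  | succ k ih =>
    refine .tail (ih (Nat.le_of_succ_le hk)) (le_of_eq_of_le ?_ hs)
    rw [Subtype.dist_eq, Nat.dist_eq]
    simp only [point]
    push_cast
    rw [abs_sub_comm, abs_of_nonneg (by ring_nf; positivity)]
    ring

theorem asdimLE_zero {S : Set (ℝ≥0 → ℝ≥0)} (hg : IsLSControl g)
    (hS : ((fun x => x * x) ∘ affineControl 2 ∘ g ∘ affineControl 0) ∈ S) :
    ASDimLE S (blockSpace g) 0 := by
  refine asdimLE_zero_of_eventually hS (fun s => {p | (p : ℕ) < start g ⌊s⌋₊}) ?_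
  have hshift : Tendsto (fun s : ℝ≥0 => s + 1) atTop atTop :=
    tendsto_atTop_mono (fun _ => le_self_add) tendsto_id
  filter_upwards [hshift.eventually hg.2.2.1] with s hs
  refine ⟨ediam_le fun x hx y hy => ?_, fun x y hy hxy => ?_⟩
  · rw [edist_nndist, ENNReal.coe_le_coe, ← NNReal.coe_le_coe, coe_nndist]
    refine le_trans ?_ (NNReal.coe_le_coe.2 (start_floor_le hg.2.1 hs))
    have hx' : (x : ℝ) < start g ⌊s⌋₊ := by exact_mod_cast hx
    have hy' : (y : ℝ) < start g ⌊s⌋₊ := by exact_mod_cast hy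
    rw [Subtype.dist_eq, Nat.dist_eq, abs_sub_le_iff]
    push_cast
    constructor <;> linarith [(x : ℕ).cast_nonneg (α := ℝ), (y : ℕ).cast_nonneg (α := ℝ)]
  · have hsN : (s : ℝ) < ⌊s⌋₊ + 1 := by exact_mod_cast Nat.lt_floor_add_one s
    refine hsN.trans_le ?_
    have hN : start g ⌊s⌋₊ ≤ y := not_lt.1 hy
    rw [Subtype.dist_eq]
    rcases lt_or_gt_of_ne (Subtype.coe_injective.ne hxy) with h | h
    · exact_mod_cast natCast_le_dist_of_add_le (add_le_of_lt_of_start_le x.2 y.2 h hN)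
    · rw [dist_comm]
      exact_mod_cast natCast_le_dist_of_add_le (add_le_of_lt_of_start_le y.2 x.2 h (hN.trans h.le))

theorem not_asdimLE_zero {S : Set (ℝ≥0 → ℝ≥0)} (hg : Monotone g)
    (hS : ∀ f ∈ S, ∀ᶠ x in atTop, f x < g x) : ¬ASDimLE S (blockSpace g) 0 := by
  refine not_asdimLE_zero_of_frequently fun f hf => ?_
  have hu : Tendsto (fun n : ℕ => (n : ℝ≥0) + 1) atTop atTop :=
    tendsto_atTop_mono (fun _ => le_self_add) tendsto_natCast_atTop_atTop
  refine hu.frequently ((hu.eventually (hS f hf)).frequently.mono fun n hn => ?_)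
  refine ⟨_, _, reflTransGen_point le_rfl (by push_cast; rfl),
    (NNReal.coe_lt_coe.2 hn).trans_le ?_⟩
  have hdist : ((length g n * (n + 1) : ℕ) : ℝ) ≤ dist (point g n 0) (point g n (length g n)) :=
    natCast_le_dist_of_add_le (by simp [point])
  calc (g (n + 1) : ℝ) ≤ g (n + 2) := by exact_mod_cast hg (by gcongr; norm_num)
    _ ≤ (length g n : ℝ≥0) * (n + 1) := by exact_mod_cast le_length_mul n
    _ ≤ _ := by rw [Subtype.dist_eq]; exact_mod_cast hdist

end BlockSpace

/-- There is a family of control semigroups indexed by the ordinals `α ≤ ω₁`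
which is strictly decreasing for `⪯`, pairwise non-dim-equivalent, and
mono-bounded at `∞` for `α < ω₁`. -/
theorem exists_uncountable_chain_of_control_semigroups :
    ∃ S : Ordinal.{0} → Set (ℝ≥0 → ℝ≥0),
      (∀ α, α ≤ (Cardinal.aleph 1).ord → IsControlSemigroup (S α)) ∧
      (∀ α β, α < β → β ≤ (Cardinal.aleph 1).ord →
        Preceq (S β) (S α) ∧ ¬ Preceq (S α) (S β)) ∧
      (∀ α β, α < β → β ≤ (Cardinal.aleph 1).ord →
        ∃ (X : Type) (mX : MetricSpace X), @ASDim (S α) X mX ≠ @ASDim (S β) X mX) ∧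
      (∀ α, α < (Cardinal.aleph 1).ord → MonoBounded (S α)) := by
  have hgen {α β : Ordinal.{0}} (hαβ : α < β) :
      ordinalScale α ∈ generators (ordinalScale '' Iio β) :=
    mem_insert_of_mem _ (.inr ⟨α, hαβ, rfl⟩)
  have haff (n : ℕ) {β : Ordinal.{0}} : affineControl n ∈ generators (ordinalScale '' Iio β) :=
    mem_insert_of_mem _ (.inl ⟨n, rfl⟩)
  refine ⟨controlSemigroup, fun α hα => isControlSemigroup_controlSemigroup hα,
    fun α β hαβ hβ => ⟨preceq_of_subset (controlSemigroup_mono hαβ.le), ?_⟩,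
    fun α β hαβ hβ => ⟨blockSpace (ordinalScale α), inferInstance, fun h => ?_⟩,
    fun α hα => ⟨_, (ordinalScale_spec hα).1, fun f hf => eventually_lt_ordinalScale hα hf⟩⟩
  · exact not_preceq_of_eventually_lt ((IsComposite.of_mem (hgen hαβ)).mem_controlSemigroup hβ)
      fun f hf => eventually_lt_ordinalScale (hαβ.trans_le hβ) hf
  · have hg := (ordinalScale_spec (hαβ.trans_le hβ)).1
    have hcomp : IsComposite (generators (ordinalScale '' Iio β))
        ((fun x => x * x) ∘ affineControl 2 ∘ ordinalScale α ∘ affineControl 0) :=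
      .comp (mem_insert _ _) (.comp (haff 2) (.comp (hgen hαβ) (.of_mem (haff 0))))
    have hβX := BlockSpace.asdimLE_zero hg (hcomp.mem_controlSemigroup hβ)
    exact BlockSpace.not_asdimLE_zero hg.2.1
      (fun f hf => eventually_lt_ordinalScale (hαβ.trans_le hβ) hf)
      (asdim_eq_zero_iff.1 (h.trans (asdim_eq_zero_iff.2 hβX)))
end

section
/- Let S be a control semigroup and let X, Y be metric spaces. If there exists a Σ(S)-coarse embedding F : X → Y, then asdim_S X ≤ asdim_S Y. -/
open Filter Set Metric Topology
open scoped NNReal ENNReal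

/-- The metric perturbation set `Σ(S)` generated by a control semigroup `S`. -/
def SigmaSet (S : Set (ℝ≥0 → ℝ≥0)) : Set (ℝ≥0 → ℝ≥0) :=
  {ρ | Continuous ρ ∧ Monotone ρ ∧ Tendsto ρ atTop atTop ∧
    ∃ g ∈ S, ∀ᶠ x in atTop, ρ x ≤ g x}

/-- If there is a `Σ(S)`-coarse embedding `F : X → Y`, then
`asdim_S X ≤ asdim_S Y`. -/
theorem asdim_le_of_sigma_coarse_embedding (S : Set (ℝ≥0 → ℝ≥0))
    (hS : IsControlSemigroup S) (X Y : Type*) [MetricSpace X] [MetricSpace Y]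
    (F : X → Y)
    (hF : ∃ ρp ∈ SigmaSet S, ∃ ρm : ℝ≥0 → ℝ≥0,
      Continuous ρm ∧ StrictMono ρm ∧ Function.Surjective ρm ∧
      (∃ ρminv : ℝ≥0 → ℝ≥0, Function.LeftInverse ρminv ρm ∧
        Function.RightInverse ρminv ρm ∧ ρminv ∈ SigmaSet S) ∧
      ∀ x y : X, ρm (nndist x y) ≤ nndist (F x) (F y) ∧
        nndist (F x) (F y) ≤ ρp (nndist x y)) :
    ASDim S X ≤ ASDim S Y := by
  obtain ⟨ρp, hρp, ρm, hρmc, hρmsm, hρmsurj, ⟨ρminv, hleft, hright, hρminv⟩, hFb⟩ := hF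
  obtain ⟨-, hρp_mono, -, gp, hgpS, hgpev⟩ := hρp
  obtain ⟨-, hρminv_mono, -, gm, hgmS, hgmev⟩ := hρminv
  have key : ∀ n : ℕ, ASDimLE S Y n → ASDimLE S X n := by
    intro n hY
    obtain ⟨f, hfS, t₀, hcov⟩ := hY
    obtain ⟨-, hf_mono, -, hf_top⟩ := hS.1 f hfS
    obtain ⟨-, -, -, hgptop⟩ := hS.1 gp hgpS
    refine ⟨gm ∘ f ∘ gp, hS.2.2 gm hgmS (f ∘ gp) (hS.2.2 f hfS gp hgpS), ?_⟩
    obtain ⟨a₁, ha₁⟩ := eventually_atTop.1 hgpev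
    obtain ⟨a₂, ha₂⟩ := eventually_atTop.1 hgmev
    obtain ⟨a₃, ha₃⟩ := eventually_atTop.1
      (((hf_top.comp hgptop).eventually_ge_atTop a₂).and
        (hgptop.eventually_ge_atTop t₀))
    refine ⟨max a₁ a₃, fun s hs => ?_⟩
    have hs₁ : a₁ ≤ s := le_trans (le_max_left _ _) hs
    have hs₃ : a₃ ≤ s := le_trans (le_max_right _ _) hs
    set t : ℝ≥0 := gp s with ht
    obtain ⟨𝒰, h𝒰cov, h𝒰⟩ := hcov t (ha₃ s hs₃).2
    refine ⟨fun i => (fun U => F ⁻¹' U) '' 𝒰 i, ?_, fun i => ⟨?_, ?_⟩⟩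
    · apply eq_univ_iff_forall.2
      intro x
      have : F x ∈ (univ : Set Y) := mem_univ _
      rw [← h𝒰cov] at this
      obtain ⟨_, ⟨i, rfl⟩, U, hU, hFx⟩ := this
      exact mem_iUnion.2 ⟨i, F ⁻¹' U, ⟨U, hU, rfl⟩, hFx⟩
    · rintro _ ⟨U, hU, rfl⟩ _ ⟨V, hV, rfl⟩ hne x hx y hy
      have hUV : U ≠ V := fun h => hne (by rw [h])
      have hd : (t : ℝ) < dist (F x) (F y) :=
        (h𝒰 i).1 U hU V hV hUV (F x) hx (F y) hy
      by_contra hcon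
      push_neg at hcon
      have h1 : nndist x y ≤ s := by
        rw [← NNReal.coe_le_coe]
        rwa [← dist_nndist]
      have h2 : nndist (F x) (F y) ≤ t :=
        le_trans (hFb x y).2 (le_trans (hρp_mono h1) (ha₁ s hs₁))
      have : dist (F x) (F y) ≤ (t : ℝ) := by
        rw [dist_nndist]
        exact_mod_cast h2
      exact absurd hd (not_lt.2 this)
    · rintro _ ⟨U, hU, rfl⟩
      apply EMetric.diam_le
      intro x hx y hy
      have hdiam : EMetric.diam U ≤ (f t : ℝ≥0∞) := (h𝒰 i).2 U hU
      have h2 : nndist (F x) (F y) ≤ f t := by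
        have := le_trans (EMetric.edist_le_diam_of_mem (show F x ∈ U from hx) (show F y ∈ U from hy)) hdiam
        rw [edist_nndist] at this
        exact_mod_cast this
      have h3 : ρm (nndist x y) ≤ f t := le_trans (hFb x y).1 h2
      have h4 : nndist x y ≤ ρminv (f t) := by
        have := hρminv_mono h3
        rwa [hleft] at this
      have h5 : ρminv (f t) ≤ gm (f t) := ha₂ (f t) (ha₃ s hs₃).1
      rw [edist_nndist]
      exact_mod_cast le_trans h4 h5
  apply sInf_le_sInf
  rintro k ⟨n, rfl, hn⟩
  exact ⟨n, rfl, key n hn⟩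
end
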